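/- arXiv:2110.13758 — 2 statements merged into one kernel-verified Lean document; each statement's English description precedes it below -/
import Mathlib

section
/- Let f : [0,δ) → ℝ be continuous and suppose ∫₀^h f(t)/(√t · √(h−t)) dt = 0 for all h ∈ (0,δ). Then f ≡ 0 on [0,δ). -/
/-!
Apply the Abel transform once more: integrating `h ↦ (∫₀^h φ(t)/√(h-t) dt) / √(s-h)` over `(0,s)`
and swapping the integrals (Tonelli, the kernel being nonnegative) gives `π ∫₀^s φ`, because
`∫_t^s dh / (√(h-t) √(s-h)) = π` for every `t < s`, an `arcsin` integral. With `φ(t) = f(t)/√t` the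
hypothesis therefore makes every primitive `∫₀^s f(t)/√t dt` vanish, so `f = 0` on `(0,δ)` by the
fundamental theorem of calculus, and at `0` by continuity.
-/

open Real Set MeasureTheory Filter Topology

lemma hasDerivAt_arcsin_affine {a b x : ℝ} (hx : x ∈ Ioo a b) :
    HasDerivAt (fun y => arcsin ((2 * y - a - b) / (b - a))) (√(x - a) * √(b - x))⁻¹ x := by
  have hxa : 0 < x - a := sub_pos.2 hx.1
  have hbx : 0 < b - x := sub_pos.2 hx.2
  have hba : 0 < b - a := by linarith
  have hsq : (√(x - a) * √(b - x)) ^ 2 = (x - a) * (b - x) := by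
    rw [mul_pow, sq_sqrt hxa.le, sq_sqrt hbx.le]
  have hu : 1 - ((2 * x - a - b) / (b - a)) ^ 2 = (2 * (√(x - a) * √(b - x)) / (b - a)) ^ 2 := by
    rw [div_pow, div_pow, mul_pow, hsq]
    field_simp
    ring
  have hu_lt : ((2 * x - a - b) / (b - a)) ^ 2 < 1 := by
    have : 0 < (2 * (√(x - a) * √(b - x)) / (b - a)) ^ 2 := by positivity
    linarith
  have hlin : HasDerivAt (fun y => (2 * y - a - b) / (b - a)) (2 / (b - a)) x := by
    simpa using ((((hasDerivAt_id x).const_mul 2).sub_const a).sub_const b).div_const (b - a)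
  refine ((hasDerivAt_arcsin (by nlinarith) (by nlinarith)).comp x hlin).congr_deriv ?_
  rw [hu, sqrt_sq (by positivity)]
  field_simp

lemma integrableOn_inv_sqrt_sub_mul_sqrt_sub (a b : ℝ) :
    IntegrableOn (fun x => (√(x - a) * √(b - x))⁻¹) (Ioo a b) :=
  (intervalIntegral.integrableOn_deriv_of_nonneg (by fun_prop)
    (fun _ hx => hasDerivAt_arcsin_affine hx) (fun _ _ => by positivity)).mono_set
    Ioo_subset_Ioc_self

lemma integral_inv_sqrt_sub_mul_sqrt_sub {a b : ℝ} (hab : a < b) :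
    ∫ x in Ioo a b, (√(x - a) * √(b - x))⁻¹ = π := by
  rw [← integral_Ioc_eq_integral_Ioo, ← intervalIntegral.integral_of_le hab.le,
    intervalIntegral.integral_eq_sub_of_hasDerivAt_of_le hab.le (by fun_prop)
      (fun _ hx => hasDerivAt_arcsin_affine hx)
      ((intervalIntegrable_iff_integrableOn_Ioo_of_le hab.le).2
        (integrableOn_inv_sqrt_sub_mul_sqrt_sub a b))]
  have hba : b - a ≠ 0 := (sub_pos.2 hab).ne'
  have h1 : (2 * b - a - b) / (b - a) = 1 := by field_simp; ring
  have h2 : (2 * a - a - b) / (b - a) = -1 := by field_simp; ring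
  simp only [h1, h2, arcsin_one, arcsin_neg_one]
  ring

theorem integral_integral_div_sqrt_sub {φ : ℝ → ℝ} {a s : ℝ} (hφ : IntegrableOn φ (Ioo a s)) :
    ∫ h in Ioo a s, (∫ t in Ioo a h, φ t / √(h - t)) / √(s - h) = π * ∫ t in Ioo a s, φ t := by
  set μ := volume.restrict (Ioo a s)
  -- `√` is `0` on negative numbers, so `G t h = 0` for `h ≤ t`: both iterated integrals can be
  -- taken over the square `(a,s)²` instead of the triangle `t < h`.
  set G : ℝ → ℝ → ℝ := fun t h => φ t * (√(h - t) * √(s - h))⁻¹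
  have hvanish : ∀ t h, h ≤ t → (√(h - t) * √(s - h))⁻¹ = 0 := fun t h hht => by
    rw [sqrt_eq_zero_of_nonpos (sub_nonpos.2 hht), zero_mul, inv_zero]
  have hle : ∀ t h, h ∈ Ioo a s \ Ioo t s → h ≤ t := fun t h hh => by
    by_contra! hth
    exact hh.2 ⟨hth, hh.1.2⟩
  have hkernel : ∀ t ∈ Ioo a s, ∫ h, (√(h - t) * √(s - h))⁻¹ ∂μ = π := fun t ht => by
    rw [setIntegral_eq_of_subset_of_forall_sdiff_eq_zero measurableSet_Ioo
      (Ioo_subset_Ioo_left ht.1.le) fun h hh => hvanish t h (hle t h hh),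
      integral_inv_sqrt_sub_mul_sqrt_sub ht.2]
  have hG : Integrable (Function.uncurry G) (μ.prod μ) := by
    have hmeas : AEStronglyMeasurable (Function.uncurry G) (μ.prod μ) :=
      hφ.aestronglyMeasurable.comp_fst.mul (Measurable.aestronglyMeasurable (by fun_prop))
    refine (integrable_prod_iff hmeas).2 ⟨?_, ?_⟩
    · filter_upwards [ae_restrict_mem measurableSet_Ioo] with t ht
      exact ((integrableOn_inv_sqrt_sub_mul_sqrt_sub t s).of_forall_sdiff_eq_zero measurableSet_Ioo
        fun h hh => hvanish t h (hle t h hh)).const_mul (φ t)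
    · refine (hφ.norm.mul_const π).congr ?_
      filter_upwards [ae_restrict_mem measurableSet_Ioo] with t ht
      have hnorm : ∀ h, ‖G t h‖ = ‖φ t‖ * (√(h - t) * √(s - h))⁻¹ := fun h => by
        rw [norm_mul, norm_of_nonneg (r := (√(h - t) * √(s - h))⁻¹) (by positivity)]
      simp only [Function.uncurry_apply_pair, hnorm, integral_const_mul, hkernel t ht]
  calc ∫ h in Ioo a s, (∫ t in Ioo a h, φ t / √(h - t)) / √(s - h)
      = ∫ h, ∫ t, G t h ∂μ ∂μ := by
        refine setIntegral_congr_fun measurableSet_Ioo fun h hh => ?_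
        rw [setIntegral_eq_of_subset_of_forall_sdiff_eq_zero measurableSet_Ioo
          (Ioo_subset_Ioo_right hh.2.le), ← integral_div]
        · refine setIntegral_congr_fun measurableSet_Ioo fun t _ => ?_
          simp only [G]
          ring
        · intro t ht
          show φ t * _ = 0
          rw [hvanish t h (not_lt.1 fun hth => ht.2 ⟨ht.1.1, hth⟩), mul_zero]
    _ = ∫ t, ∫ h, G t h ∂μ ∂μ := (integral_integral_swap hG).symm
    _ = ∫ t, π * φ t ∂μ := by
        refine setIntegral_congr_fun measurableSet_Ioo fun t ht => ?_
        rw [integral_const_mul, hkernel t ht, mul_comm]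
    _ = π * ∫ t in Ioo a s, φ t := integral_const_mul _ _

lemma integrableOn_div_sqrt {f : ℝ → ℝ} {u : ℝ} (hf : ContinuousOn f (Icc 0 u)) :
    IntegrableOn (fun t => f t / √t) (Ioo 0 u) := by
  have hinv : IntegrableOn (fun t => (√t)⁻¹) (Ioo 0 u) :=
    (intervalIntegral.integrableOn_deriv_of_nonneg (g := fun t => 2 * √t) (by fun_prop)
      (fun t ht => ((hasDerivAt_sqrt ht.1.ne').const_mul 2).congr_deriv (by field_simp))
      (fun _ _ => by positivity)).mono_set Ioo_subset_Ioc_self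
  simpa only [div_eq_mul_inv] using
    hinv.continuousOn_mul_of_subset hf isCompact_Icc measurableSet_Ioo Ioo_subset_Icc_self

lemma eqOn_zero_of_forall_setIntegral_Ioo_eq_zero {g : ℝ → ℝ} {a b : ℝ}
    (hg : ContinuousOn g (Ioo a b)) (hint : ∀ u ∈ Ioo a b, IntegrableOn g (Ioo a u))
    (h0 : ∀ u ∈ Ioo a b, ∫ t in Ioo a u, g t = 0) : EqOn g 0 (Ioo a b) := by
  intro x hx
  have hderiv : HasDerivAt (fun u => ∫ t in a..u, g t) (g x) x :=
    intervalIntegral.integral_hasDerivAt_right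
      ((intervalIntegrable_iff_integrableOn_Ioo_of_le hx.1.le).2 (hint x hx))
      (hg.stronglyMeasurableAtFilter isOpen_Ioo x hx) (hg.continuousAt (isOpen_Ioo.mem_nhds hx))
  have hconst : (fun u => ∫ t in a..u, g t) =ᶠ[𝓝 x] fun _ => 0 := by
    filter_upwards [isOpen_Ioo.mem_nhds hx] with u hu
    rw [intervalIntegral.integral_of_le hu.1.le, integral_Ioc_eq_integral_Ioo, h0 u hu]
  exact hderiv.unique ((hasDerivAt_const x 0).congr_of_eventuallyEq hconst)

/-- Injectivity of the Abel-type operator: if `f` is continuous on `[0,δ)` and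
`∫₀^h f(t)/(√t √(h−t)) dt = 0` for all `h ∈ (0,δ)`, then `f ≡ 0` on `[0,δ)`. -/
theorem stmt_5 (δ : ℝ) (hδ : 0 < δ) (f : ℝ → ℝ)
    (hf : ContinuousOn f (Set.Ico 0 δ))
    (habel : ∀ h ∈ Set.Ioo (0 : ℝ) δ,
      (∫ t in (0 : ℝ)..h, f t / (Real.sqrt t * Real.sqrt (h - t))) = 0) :
    ∀ t ∈ Set.Ico (0 : ℝ) δ, f t = 0 := by
  have hint : ∀ u ∈ Ioo 0 δ, IntegrableOn (fun t => f t / √t) (Ioo 0 u) := fun u hu =>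
    integrableOn_div_sqrt (hf.mono (Icc_subset_Ico_right hu.2))
  have hmean : ∀ u ∈ Ioo 0 δ, ∫ t in Ioo 0 u, f t / √t = 0 := by
    intro u hu
    have hinner : ∀ h ∈ Ioo 0 u, ∫ t in Ioo 0 h, f t / √t / √(h - t) = 0 := fun h hh => by
      simpa only [intervalIntegral.integral_of_le hh.1.le, integral_Ioc_eq_integral_Ioo, div_div]
        using habel h ⟨hh.1, hh.2.trans hu.2⟩
    have := integral_integral_div_sqrt_sub (hint u hu)
    rw [setIntegral_congr_fun measurableSet_Ioo fun h hh => by rw [hinner h hh, zero_div],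
      integral_zero] at this
    exact (mul_eq_zero.1 this.symm).resolve_left pi_ne_zero
  have hpos : EqOn (fun t => f t / √t) 0 (Ioo 0 δ) :=
    eqOn_zero_of_forall_setIntegral_Ioo_eq_zero
      ((hf.mono Ioo_subset_Ico_self).div (continuous_sqrt.continuousOn)
        fun t ht => (sqrt_pos.2 ht.1).ne') hint hmean
  have hf0 : EqOn f 0 (Ioo 0 δ) := fun t ht => by
    simpa [(sqrt_pos.2 ht.1).ne'] using hpos ht
  exact hf0.of_subset_closure hf continuousOn_const Ioo_subset_Ico_self
    (by rw [closure_Ioo hδ.ne]; exact Ico_subset_Icc_self)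
end

section
/- Let k ≥ 0 be an integer and let a₁, a₂, c₁, c₂ be real numbers with c₁ ≠ 0 and c₂ ≠ 0. If the function h ↦ a₂ c₂ (−h)^{k + 5/6} + a₁ c₁ (−h)^{k + 1/6}, defined for h ≤ 0, extends to a function of class C^{k+1} on a neighborhood of 0 (being identically 0 for h > 0), then a₁ = a₂ = 0. -/
/-!
Differentiating on `h < 0` multiplies each coefficient by a nonzero factor and lowers both
exponents by one, while the derivative still vanishes on `h > 0`. After `k` steps the function
is `C¹` near `0` and vanishes on the right, so its value and derivative at `0` are zero and it
is `o(h)`. On the left it is `b₂ (-h) ^ (5/6) + b₁ (-h) ^ (1/6)`, and since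
`|h| ≪ (-h) ^ (5/6) ≪ (-h) ^ (1/6)` as `h → 0⁻`, first `b₁` and then `b₂` must vanish.
-/

open Filter Topology Asymptotics

lemma tendsto_neg_rpow_nhdsLT_zero {r : ℝ} (hr : 0 < r) :
    Tendsto (fun h : ℝ => (-h) ^ r) (𝓝[<] 0) (𝓝 0) := by
  have hneg : Tendsto (fun h : ℝ => -h) (𝓝[<] 0) (𝓝 0) := by
    simpa using (continuous_neg.tendsto (0 : ℝ)).mono_left nhdsWithin_le_nhds
  simpa [Real.zero_rpow hr.ne', Function.comp_def] using
    (Real.continuousAt_rpow_const 0 r (Or.inr hr.le)).tendsto.comp hneg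

lemma isLittleO_neg_rpow_nhdsLT_zero {r s : ℝ} (hsr : s < r) :
    (fun h : ℝ => (-h) ^ r) =o[𝓝[<] 0] fun h => (-h) ^ s := by
  have hpos : ∀ᶠ h in 𝓝[<] (0 : ℝ), 0 < -h := by
    filter_upwards [self_mem_nhdsWithin] with h (hh : h < 0) using neg_pos.2 hh
  refine (isLittleO_iff_tendsto' ?_).2 ((tendsto_neg_rpow_nhdsLT_zero (sub_pos.2 hsr)).congr' ?_)
  · filter_upwards [hpos] with h hh h0 using absurd h0 (Real.rpow_pos_of_pos hh s).ne'
  · filter_upwards [hpos] with h hh using Real.rpow_sub hh r s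

lemma eq_zero_of_const_mul_neg_rpow_isLittleO {b r : ℝ}
    (hlo : (fun h : ℝ => b * (-h) ^ r) =o[𝓝[<] 0] fun h => (-h) ^ r) : b = 0 := by
  by_contra hb
  refine isLittleO_irrefl ?_ ((isLittleO_const_mul_left_iff hb).1 hlo)
  refine Eventually.frequently ?_
  filter_upwards [self_mem_nhdsWithin] with h (hh : h < 0)
  exact (Real.rpow_pos_of_pos (neg_pos.2 hh) r).ne'

lemma coeffs_eq_zero_of_isLittleO_id {F : ℝ → ℝ} {r₁ r₂ b₁ b₂ : ℝ} (h12 : r₁ < r₂) (h21 : r₂ < 1)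
    (hF : F =o[𝓝[<] 0] id) (hneg : ∀ h < 0, F h = b₂ * (-h) ^ r₂ + b₁ * (-h) ^ r₁) :
    b₁ = 0 ∧ b₂ = 0 := by
  have hF₂ : F =o[𝓝[<] 0] fun h => (-h) ^ r₂ :=
    (hF.neg_right.congr_right fun h => (Real.rpow_one (-h)).symm).trans
      (isLittleO_neg_rpow_nhdsLT_zero h21)
  have hF₁ : F =o[𝓝[<] 0] fun h => (-h) ^ r₁ := hF₂.trans (isLittleO_neg_rpow_nhdsLT_zero h12)
  have hb₁ : b₁ = 0 := by
    refine eq_zero_of_const_mul_neg_rpow_isLittleO <|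
      (hF₁.sub ((isLittleO_neg_rpow_nhdsLT_zero h12).const_mul_left b₂)).congr' ?_ .rfl
    filter_upwards [self_mem_nhdsWithin] with h (hh : h < 0)
    rw [hneg h hh]
    ring
  refine ⟨hb₁, eq_zero_of_const_mul_neg_rpow_isLittleO <| hF₂.congr' ?_ .rfl⟩
  filter_upwards [self_mem_nhdsWithin] with h (hh : h < 0)
  rw [hneg h hh, hb₁]
  ring

lemma ContinuousAt.eq_zero_of_forall_pos {F : ℝ → ℝ} (hF : ContinuousAt F 0)
    (hpos : ∀ h > 0, F h = 0) : F 0 = 0 :=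
  tendsto_nhds_unique_of_eventuallyEq (l := 𝓝[>] (0 : ℝ))
    (hF.tendsto.mono_left nhdsWithin_le_nhds) tendsto_const_nhds
    (eventually_nhdsWithin_of_forall hpos)

lemma HasDerivAt.eq_zero_of_forall_pos {F : ℝ → ℝ} {F' : ℝ} (hF : HasDerivAt F F' 0)
    (hpos : ∀ h > 0, F h = 0) : F' = 0 :=
  (uniqueDiffWithinAt_Ioi 0).eq_deriv _ hF.hasDerivWithinAt <|
    (hasDerivWithinAt_const 0 _ 0).congr hpos (hF.continuousAt.eq_zero_of_forall_pos hpos)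

lemma HasDerivAt.isLittleO_id_of_forall_pos {F : ℝ → ℝ} {F' : ℝ} (hF : HasDerivAt F F' 0)
    (hpos : ∀ h > 0, F h = 0) : F =o[𝓝 0] id := by
  have h0 := hF.continuousAt.eq_zero_of_forall_pos hpos
  have h := hasDerivAt_iff_isLittleO.1 hF
  simp only [h0, hF.eq_zero_of_forall_pos hpos, sub_zero, smul_zero] at h
  exact h

lemma hasDerivAt_neg_rpow_add {x : ℝ} (hx : x < 0) (b₁ b₂ p₁ p₂ : ℝ) :
    HasDerivAt (fun h => b₂ * (-h) ^ p₂ + b₁ * (-h) ^ p₁)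
      (-(p₂ * b₂) * (-x) ^ (p₂ - 1) + -(p₁ * b₁) * (-x) ^ (p₁ - 1)) x := by
  have hx' : -x ≠ 0 := by linarith
  exact ((((hasDerivAt_neg x).rpow_const (.inl hx')).const_mul b₂).add
    (((hasDerivAt_neg x).rpow_const (.inl hx')).const_mul b₁)).congr_deriv (by ring)

lemma deriv_eq_of_forall_neg {F : ℝ → ℝ} {b₁ b₂ p₁ p₂ : ℝ}
    (hneg : ∀ h < 0, F h = b₂ * (-h) ^ p₂ + b₁ * (-h) ^ p₁) {x : ℝ} (hx : x < 0) :
    deriv F x = -(p₂ * b₂) * (-x) ^ (p₂ - 1) + -(p₁ * b₁) * (-x) ^ (p₁ - 1) := by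
  have hev : F =ᶠ[𝓝 x] fun h => b₂ * (-h) ^ p₂ + b₁ * (-h) ^ p₁ :=
    eventually_of_mem (Iio_mem_nhds hx) hneg
  rw [hev.deriv_eq, (hasDerivAt_neg_rpow_add hx b₁ b₂ p₁ p₂).deriv]

lemma deriv_eq_zero_of_forall_pos {F : ℝ → ℝ} (hpos : ∀ h > 0, F h = 0) {x : ℝ} (hx : 0 < x) :
    deriv F x = 0 := by
  have hev : F =ᶠ[𝓝 x] fun _ => 0 := eventually_of_mem (Ioi_mem_nhds hx) hpos
  rw [hev.deriv_eq, deriv_const]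

theorem coeffs_eq_zero_of_contDiffOn {r₁ r₂ : ℝ} (hr₁ : -1 < r₁) (h12 : r₁ < r₂) (h21 : r₂ < 1)
    (n : ℕ) {F : ℝ → ℝ} {U : Set ℝ} {b₁ b₂ : ℝ} (hU : U ∈ 𝓝 0)
    (hF : ContDiffOn ℝ ((n : ℕ∞) + 1) F U)
    (hneg : ∀ h < 0, F h = b₂ * (-h) ^ ((n : ℝ) + r₂) + b₁ * (-h) ^ ((n : ℝ) + r₁))
    (hpos : ∀ h > 0, F h = 0) :
    b₁ = 0 ∧ b₂ = 0 := by
  induction n generalizing F U b₁ b₂ with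
  | zero =>
    have hd : DifferentiableAt ℝ F 0 := (hF.contDiffAt hU).differentiableAt (by simp)
    exact coeffs_eq_zero_of_isLittleO_id h12 h21
      ((hd.hasDerivAt.isLittleO_id_of_forall_pos hpos).mono nhdsWithin_le_nhds)
      (by simpa using hneg)
  | succ n ih =>
    have hdF : ContDiffOn ℝ ((n : ℕ∞) + 1) (deriv F) (interior U) :=
      (hF.mono interior_subset).deriv_of_isOpen isOpen_interior (by push_cast; rfl)
    have hexp (r : ℝ) : ((n + 1 : ℕ) : ℝ) + r - 1 = n + r := by push_cast; ring
    have hderiv : ∀ h < 0, deriv F h = -((((n + 1 : ℕ) : ℝ) + r₂) * b₂) * (-h) ^ ((n : ℝ) + r₂)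
        + -((((n + 1 : ℕ) : ℝ) + r₁) * b₁) * (-h) ^ ((n : ℝ) + r₁) := by
      intro h hh
      rw [deriv_eq_of_forall_neg hneg hh, hexp, hexp]
    obtain ⟨hb₁, hb₂⟩ := ih (interior_mem_nhds.2 hU) hdF hderiv
      fun h hh => deriv_eq_zero_of_forall_pos hpos hh
    have hp (r : ℝ) (hr : -1 < r) : ((n + 1 : ℕ) : ℝ) + r ≠ 0 := by
      push_cast
      linarith [(n.cast_nonneg : (0 : ℝ) ≤ n)]
    exact ⟨(mul_eq_zero.1 (neg_eq_zero.1 hb₁)).resolve_left (hp r₁ hr₁),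
      (mul_eq_zero.1 (neg_eq_zero.1 hb₂)).resolve_left (hp r₂ (by linarith))⟩

/-- If `h ↦ a₂c₂(−h)^(k+5/6) + a₁c₁(−h)^(k+1/6)` (for `h ≤ 0`, extended by `0`
for `h > 0`) is of class `C^(k+1)` near `0` and `c₁, c₂ ≠ 0`, then
`a₁ = a₂ = 0`. -/
theorem stmt_7 (k : ℕ) (a₁ a₂ c₁ c₂ : ℝ) (hc₁ : c₁ ≠ 0) (hc₂ : c₂ ≠ 0)
    (F : ℝ → ℝ) (U : Set ℝ) (hU : U ∈ nhds (0 : ℝ))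
    (hF : ContDiffOn ℝ ((k : ℕ∞) + 1) F U)
    (hneg : ∀ h ≤ (0 : ℝ), F h =
      a₂ * c₂ * (-h) ^ ((k : ℝ) + 5 / 6) + a₁ * c₁ * (-h) ^ ((k : ℝ) + 1 / 6))
    (hpos : ∀ h > (0 : ℝ), F h = 0) :
    a₁ = 0 ∧ a₂ = 0 := by
  obtain ⟨h₁, h₂⟩ := coeffs_eq_zero_of_contDiffOn (r₁ := 1 / 6) (r₂ := 5 / 6) (by norm_num)
    (by norm_num) (by norm_num) k hU hF (fun h hh => hneg h hh.le) hpos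
  exact ⟨(mul_eq_zero.1 h₁).resolve_right hc₁, (mul_eq_zero.1 h₂).resolve_right hc₂⟩
end
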